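/- arXiv:1709.05702 — 3 statements merged into one kernel-verified Lean document; each statement's English description precedes it below -/
import Mathlib

section
/- Compositions of dihomotopy equivalences are dihomotopy equivalences: if (f₁, g₁, F₁, G₁) is a dihomotopy equivalence from X to Y and (f₂, g₂, F₂, G₂) is a dihomotopy equivalence from Y to Z, then (f₂∘f₁, g₁∘g₂, F₁∘F₂, G₂∘G₁) is a dihomotopy equivalence from X to Z. -/
open unitInterval

/-- A d-space structure on a topological space `X`: a distinguished set of
continuous maps `I → X` (the *dipaths*) containing the constants and closed
under monotone reparametrization and concatenation. -/
structure DirectedSpace (X : Type*) [TopologicalSpace X] where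
  dipaths : Set C(I, X)
  const_mem : ∀ x : X, ContinuousMap.const I x ∈ dipaths
  reparam_mem : ∀ p ∈ dipaths, ∀ φ : C(I, I), Monotone φ → p.comp φ ∈ dipaths
  trans_mem : ∀ {x y z : X} (γ : Path x y) (γ' : Path y z),
      γ.toContinuousMap ∈ dipaths → γ'.toContinuousMap ∈ dipaths →
      (γ.trans γ').toContinuousMap ∈ dipaths

variable {X : Type*} {Y : Type*} {Z : Type*}
variable [TopologicalSpace X] [TopologicalSpace Y] [TopologicalSpace Z]

/-- `PX(a,b)`: the set of dipaths from `a` to `b` (as a subspace of `C(I,X)`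
with the compact-open topology). -/
def DiPaths (D : DirectedSpace X) (a b : X) : Set C(I, X) :=
  {p | p ∈ D.dipaths ∧ p 0 = a ∧ p 1 = b}

/-- `Γ_X`: pairs of points joined by a dipath. -/
def DGamma (D : DirectedSpace X) : Set (X × X) :=
  {z | ∃ p : C(I, X), p ∈ DiPaths D z.1 z.2}

/-- A dmap between d-spaces. -/
structure DMap (D : DirectedSpace X) (E : DirectedSpace Y) where
  toCM : C(X, Y)
  maps_dipaths : ∀ p ∈ D.dipaths, toCM.comp p ∈ E.dipaths

/-- Composition of dmaps. -/
def DMap.comp' {D : DirectedSpace X} {E : DirectedSpace Y} {F : DirectedSpace Z}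
    (f₂ : DMap E F) (f₁ : DMap D E) : DMap D F where
  toCM := f₂.toCM.comp f₁.toCM
  maps_dipaths := fun p hp => by
    rw [ContinuousMap.comp_assoc]
    exact f₂.maps_dipaths _ (f₁.maps_dipaths p hp)

/-- The map `Pf_{a,b} : PX(a,b) → PY(f a, f b)` induced by a dmap, as a
continuous map (jointly continuous in the path; bigraded in `a, b`). -/
noncomputable def DMap.pmap {D : DirectedSpace X} {E : DirectedSpace Y}
    (f : DMap D E) (a b : X) :
    C(↥(DiPaths D a b), ↥(DiPaths E (f.toCM a) (f.toCM b))) where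
  toFun p := ⟨f.toCM.comp p.val, f.maps_dipaths _ p.2.1,
    by simp [p.2.2.1], by simp [p.2.2.2]⟩
  continuous_toFun := Continuous.subtype_mk
    ((ContinuousMap.continuous_postcomp f.toCM).comp continuous_subtype_val) _

lemma DMap.gamma_mem {D : DirectedSpace X} {E : DirectedSpace Y} (f : DMap D E)
    {a b : X} (h : (a, b) ∈ DGamma D) : (f.toCM a, f.toCM b) ∈ DGamma E := by
  obtain ⟨p, hp, h0, h1⟩ := h
  exact ⟨f.toCM.comp p, f.maps_dipaths p hp, by simp [h0], by simp [h1]⟩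

lemma DMap.map_path_mem {D : DirectedSpace X} {E : DirectedSpace Y} (f : DMap D E)
    {x y : X} (γ : Path x y) (h : γ.toContinuousMap ∈ D.dipaths) :
    (γ.map f.toCM.continuous).toContinuousMap ∈ E.dipaths := by
  have : (γ.map f.toCM.continuous).toContinuousMap = f.toCM.comp γ.toContinuousMap := by
    ext t; rfl
  rw [this]
  exact f.maps_dipaths _ h

/-- A dipath (as an element of a dipath space) regarded as a `Path`. -/
def diToPath {D : DirectedSpace X} {a b : X} (p : ↥(DiPaths D a b)) : Path a b where
  toContinuousMap := p.val
  source' := p.2.2.1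
  target' := p.2.2.2

/-- A `Path` consisting of dipaths regarded as an element of a dipath space. -/
def Path.toDi {D : DirectedSpace X} {a b : X} (γ : Path a b)
    (h : γ.toContinuousMap ∈ D.dipaths) : ↥(DiPaths D a b) :=
  ⟨γ.toContinuousMap, h, γ.source, γ.target⟩

/-- The extension map `PX(α,β) : PX(a,b) → PX(a',b')`, `p ↦ α * p * β`, for
`α` a dipath from `a'` to `a` and `β` a dipath from `b` to `b'`. -/
noncomputable def extCM (D : DirectedSpace X) {a b a' b' : X}
    (α : Path a' a) (β : Path b b')
    (hα : α.toContinuousMap ∈ D.dipaths) (hβ : β.toContinuousMap ∈ D.dipaths) :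
    C(↥(DiPaths D a b), ↥(DiPaths D a' b')) where
  toFun p := ⟨((α.trans (diToPath p)).trans β).toContinuousMap,
    D.trans_mem _ _ (D.trans_mem _ _ hα p.2.1) hβ,
    Path.source _, Path.target _⟩
  continuous_toFun := by
    apply Continuous.subtype_mk
    apply continuous_induced_dom.comp
    have h1 : Continuous fun p : ↥(DiPaths D a b) => diToPath p :=
      continuous_induced_rng.mpr continuous_subtype_val
    exact ((continuous_const.path_trans h1).path_trans continuous_const)

/-- A pair of continuous maps forming a homotopy equivalence. -/
def IsHomotopyEquivPair {A B : Type*} [TopologicalSpace A] [TopologicalSpace B]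
    (u : C(A, B)) (v : C(B, A)) : Prop :=
  (v.comp u).Homotopic (ContinuousMap.id A) ∧ (u.comp v).Homotopic (ContinuousMap.id B)

/-- The total space `PY^f` of dipaths of `Y` between images under `f` of pairs
in `Γ_X`, together with the grading pair. -/
def OverPaths {D : DirectedSpace X} {E : DirectedSpace Y} (f : DMap D E) :
    Set ((X × X) × C(I, Y)) :=
  {z | z.1 ∈ DGamma D ∧ z.2 ∈ DiPaths E (f.toCM z.1.1) (f.toCM z.1.2)}

/-- A continuously bigraded map `F : PY^f → PX`, with
`F_{a,b} : PY(f a, f b) → PX(a,b)`; continuity is joint in the grading and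
in the path. -/
structure Bigraded {D : DirectedSpace X} {E : DirectedSpace Y} (f : DMap D E) where
  toCM : C(↥(OverPaths f), C(I, X))
  mem : ∀ z : ↥(OverPaths f), toCM z ∈ DiPaths D z.val.1.1 z.val.1.2

/-- The slice `F_{a,b} : PY(f a, f b) → PX(a,b)` of a continuously bigraded map. -/
noncomputable def Bigraded.slice {D : DirectedSpace X} {E : DirectedSpace Y}
    {f : DMap D E} (F : Bigraded f) {a b : X} (hab : (a, b) ∈ DGamma D) :
    C(↥(DiPaths E (f.toCM a) (f.toCM b)), ↥(DiPaths D a b)) where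
  toFun p := ⟨F.toCM ⟨((a, b), p.val), hab, p.2⟩, F.mem _⟩
  continuous_toFun := by
    apply Continuous.subtype_mk
    exact F.toCM.continuous.comp
      (Continuous.subtype_mk (continuous_const.prodMk continuous_subtype_val) _)
/-- A dihomotopy equivalence between d-spaces `D` (on `X`) and `E` (on `Y`). -/
structure DihomotopyEquiv (D : DirectedSpace X) (E : DirectedSpace Y) where
  /-- the forward dmap -/
  f : DMap D E
  /-- the backward dmap -/
  g : DMap E D
  /-- `g ∘ f` is homotopic to the identity -/
  gf : (g.toCM.comp f.toCM).Homotopic (ContinuousMap.id X)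
  /-- `f ∘ g` is homotopic to the identity -/
  fg : (f.toCM.comp g.toCM).Homotopic (ContinuousMap.id Y)
  /-- the continuously bigraded map `F : PY^f → PX` -/
  F : Bigraded f
  /-- the continuously bigraded map `G : PX^g → PY` -/
  G : Bigraded g
  /-- each `(Pf_{a,b}, F_{a,b})` is a homotopy equivalence -/
  hF : ∀ {a b : X} (hab : (a, b) ∈ DGamma D),
      IsHomotopyEquivPair (f.pmap a b) (F.slice hab)
  /-- each `(Pg_{c,d}, G_{c,d})` is a homotopy equivalence -/
  hG : ∀ {c d : Y} (hcd : (c, d) ∈ DGamma E),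
      IsHomotopyEquivPair (g.pmap c d) (G.slice hcd)
  /-- extension condition: for every extension `(α,β)` of `(a,b)` to `(a',b')`
  in `X` there is an extension `(γ,δ)` in `Y` making the `Pf`-square and the
  `F`-square commute up to homotopy. -/
  extF : ∀ {a b a' b' : X} (hab : (a, b) ∈ DGamma D) (ha'b' : (a', b') ∈ DGamma D)
      (α : Path a' a) (β : Path b b')
      (hα : α.toContinuousMap ∈ D.dipaths) (hβ : β.toContinuousMap ∈ D.dipaths),
      ∃ (γ : Path (f.toCM a') (f.toCM a)) (δ : Path (f.toCM b) (f.toCM b'))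
        (hγ : γ.toContinuousMap ∈ E.dipaths) (hδ : δ.toContinuousMap ∈ E.dipaths),
        ((f.pmap a' b').comp (extCM D α β hα hβ)).Homotopic
          ((extCM E γ δ hγ hδ).comp (f.pmap a b)) ∧
        ((F.slice ha'b').comp (extCM E γ δ hγ hδ)).Homotopic
          ((extCM D α β hα hβ).comp (F.slice hab))
  /-- extension condition: for every extension `(α,β)` in `X` of a pair
  `(g c, g d)` there is an extension `(γ,δ)` of `(c,d)` in `Y`, landing in the
  image of `g`, making the `G`-square and the `Pg`-square commute up to
  homotopy. -/
  extG : ∀ {c d : Y} {u' v' : X} (hcd : (c, d) ∈ DGamma E)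
      (α : Path u' (g.toCM c)) (β : Path (g.toCM d) v')
      (hα : α.toContinuousMap ∈ D.dipaths) (hβ : β.toContinuousMap ∈ D.dipaths),
      ∃ (c' d' : Y) (hc'd' : (c', d') ∈ DGamma E)
        (hc' : g.toCM c' = u') (hd' : g.toCM d' = v')
        (γ : Path c' c) (δ : Path d d')
        (hγ : γ.toContinuousMap ∈ E.dipaths) (hδ : δ.toContinuousMap ∈ E.dipaths),
        ((G.slice hc'd').comp
            (extCM D (α.cast hc' rfl) (β.cast rfl hd') hα hβ)).Homotopic
          ((extCM E γ δ hγ hδ).comp (G.slice hcd)) ∧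
        ((extCM D (α.cast hc' rfl) (β.cast rfl hd') hα hβ).comp
            (g.pmap c d)).Homotopic
          ((g.pmap c' d').comp (extCM E γ δ hγ hδ))
  /-- extension condition: for every extension `(γ,δ)` in `Y` of a pair
  `(f a, f b)` there is an extension `(α,β)` of `(a,b)` in `X`, landing in the
  image of `f`, making the `Pf`-square and the `F`-square commute up to
  homotopy. -/
  extF' : ∀ {a b : X} {u' v' : Y} (hab : (a, b) ∈ DGamma D)
      (γ : Path u' (f.toCM a)) (δ : Path (f.toCM b) v')
      (hγ : γ.toContinuousMap ∈ E.dipaths) (hδ : δ.toContinuousMap ∈ E.dipaths),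
      ∃ (a' b' : X) (ha'b' : (a', b') ∈ DGamma D)
        (ha' : f.toCM a' = u') (hb' : f.toCM b' = v')
        (α : Path a' a) (β : Path b b')
        (hα : α.toContinuousMap ∈ D.dipaths) (hβ : β.toContinuousMap ∈ D.dipaths),
        ((f.pmap a' b').comp (extCM D α β hα hβ)).Homotopic
          ((extCM E (γ.cast ha' rfl) (δ.cast rfl hb') hγ hδ).comp (f.pmap a b)) ∧
        ((F.slice ha'b').comp
            (extCM E (γ.cast ha' rfl) (δ.cast rfl hb') hγ hδ)).Homotopic
          ((extCM D α β hα hβ).comp (F.slice hab))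
  /-- extension condition: for every extension `(γ,δ)` of `(c,d)` to `(c',d')`
  in `Y` there is an extension `(α,β)` in `X` making the `G`-square and the
  `Pg`-square commute up to homotopy. -/
  extG' : ∀ {c d c' d' : Y} (hcd : (c, d) ∈ DGamma E) (hc'd' : (c', d') ∈ DGamma E)
      (γ : Path c' c) (δ : Path d d')
      (hγ : γ.toContinuousMap ∈ E.dipaths) (hδ : δ.toContinuousMap ∈ E.dipaths),
      ∃ (α : Path (g.toCM c') (g.toCM c)) (β : Path (g.toCM d) (g.toCM d'))
        (hα : α.toContinuousMap ∈ D.dipaths) (hβ : β.toContinuousMap ∈ D.dipaths),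
        ((G.slice hc'd').comp (extCM D α β hα hβ)).Homotopic
          ((extCM E γ δ hγ hδ).comp (G.slice hcd)) ∧
        ((extCM D α β hα hβ).comp (g.pmap c d)).Homotopic
          ((g.pmap c' d').comp (extCM E γ δ hγ hδ))
/-! The composite data are the evident composites, and homotopy equivalences of path spaces
compose. For the extension conditions, an extension in `X` is carried by `h₁` to one in `Y` and
then by `h₂` to one in `Z` (from `Z` back to `X` for `extF'` and `extG'`), and the two
homotopy-commutative squares obtained paste into one. -/

namespace ContinuousMap.Homotopic

theorem paste_squares {A B C A' B' C' : Type*}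
    [TopologicalSpace A] [TopologicalSpace B] [TopologicalSpace C]
    [TopologicalSpace A'] [TopologicalSpace B'] [TopologicalSpace C']
    {u : C(A, B)} {v : C(B, C)} {u' : C(A', B')} {v' : C(B', C')}
    {eA : C(A, A')} {eB : C(B, B')} {eC : C(C, C')}
    (h₁ : (u'.comp eA).Homotopic (eB.comp u)) (h₂ : (v'.comp eB).Homotopic (eC.comp v)) :
    ((v'.comp u').comp eA).Homotopic (eC.comp (v.comp u)) :=
  ((refl v').comp h₁).trans (h₂.comp (refl u))

end ContinuousMap.Homotopic

theorem IsHomotopyEquivPair.comp {A B C : Type*}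
    [TopologicalSpace A] [TopologicalSpace B] [TopologicalSpace C]
    {u : C(A, B)} {v : C(B, A)} {u' : C(B, C)} {v' : C(C, B)}
    (h : IsHomotopyEquivPair u v) (h' : IsHomotopyEquivPair u' v') :
    IsHomotopyEquivPair (u'.comp u) (v.comp v') :=
  ⟨(((ContinuousMap.Homotopic.refl v).comp h'.1).comp (.refl u)).trans h.1,
    (((ContinuousMap.Homotopic.refl u').comp h.2).comp (.refl v')).trans h'.2⟩

variable {D : DirectedSpace X} {E : DirectedSpace Y} {Fsp : DirectedSpace Z}

theorem DihomotopyEquiv.isHomotopyEquivPair (h : DihomotopyEquiv D E) :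
    IsHomotopyEquivPair h.f.toCM h.g.toCM :=
  ⟨h.gf, h.fg⟩

noncomputable def Bigraded.comp {f₁ : DMap D E} {f₂ : DMap E Fsp}
    (F₁ : Bigraded f₁) (F₂ : Bigraded f₂) : Bigraded (f₂.comp' f₁) where
  toCM :=
    { toFun := fun z => F₁.toCM ⟨(z.val.1,
        F₂.toCM ⟨((f₁.toCM z.val.1.1, f₁.toCM z.val.1.2), z.val.2),
          f₁.gamma_mem z.2.1, z.2.2⟩), z.2.1, F₂.mem _⟩
      continuous_toFun := by
        refine F₁.toCM.continuous.comp (.subtype_mk (.prodMk (by fun_prop) ?_) _)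
        exact F₂.toCM.continuous.comp (.subtype_mk (by fun_prop) _) }
  mem _ := F₁.mem _

noncomputable def DihomotopyEquiv.trans (h₁ : DihomotopyEquiv D E) (h₂ : DihomotopyEquiv E Fsp) :
    DihomotopyEquiv D Fsp where
  f := h₂.f.comp' h₁.f
  g := h₁.g.comp' h₂.g
  gf := (h₁.isHomotopyEquivPair.comp h₂.isHomotopyEquivPair).1
  fg := (h₁.isHomotopyEquivPair.comp h₂.isHomotopyEquivPair).2
  F := h₁.F.comp h₂.F
  G := h₂.G.comp h₁.G
  hF hab := (h₁.hF hab).comp (h₂.hF (h₁.f.gamma_mem hab))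
  hG hcd := (h₂.hG hcd).comp (h₁.hG (h₂.g.gamma_mem hcd))
  extF hab ha'b' α β hα hβ := by
    obtain ⟨γ₁, δ₁, hγ₁, hδ₁, f₁_sq, F₁_sq⟩ := h₁.extF hab ha'b' α β hα hβ
    obtain ⟨γ₂, δ₂, hγ₂, hδ₂, f₂_sq, F₂_sq⟩ :=
      h₂.extF (h₁.f.gamma_mem hab) (h₁.f.gamma_mem ha'b') γ₁ δ₁ hγ₁ hδ₁
    exact ⟨γ₂, δ₂, hγ₂, hδ₂, f₁_sq.paste_squares f₂_sq, F₂_sq.paste_squares F₁_sq⟩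
  extG hcd α β hα hβ := by
    obtain ⟨c₁, d₁, hc₁d₁, rfl, rfl, γ₁, δ₁, hγ₁, hδ₁, G₁_sq, g₁_sq⟩ :=
      h₁.extG (h₂.g.gamma_mem hcd) α β hα hβ
    obtain ⟨c₂, d₂, hc₂d₂, rfl, rfl, γ₂, δ₂, hγ₂, hδ₂, G₂_sq, g₂_sq⟩ :=
      h₂.extG hcd γ₁ δ₁ hγ₁ hδ₁
    exact ⟨c₂, d₂, hc₂d₂, rfl, rfl, γ₂, δ₂, hγ₂, hδ₂, G₁_sq.paste_squares G₂_sq,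
      (g₂_sq.symm.paste_squares g₁_sq.symm).symm⟩
  extF' hab γ δ hγ hδ := by
    obtain ⟨a₂, b₂, ha₂b₂, rfl, rfl, α₂, β₂, hα₂, hβ₂, f₂_sq, F₂_sq⟩ :=
      h₂.extF' (h₁.f.gamma_mem hab) γ δ hγ hδ
    obtain ⟨a₁, b₁, ha₁b₁, rfl, rfl, α₁, β₁, hα₁, hβ₁, f₁_sq, F₁_sq⟩ :=
      h₁.extF' hab α₂ β₂ hα₂ hβ₂
    exact ⟨a₁, b₁, ha₁b₁, rfl, rfl, α₁, β₁, hα₁, hβ₁, f₁_sq.paste_squares f₂_sq,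
      F₂_sq.paste_squares F₁_sq⟩
  extG' hcd hc'd' γ δ hγ hδ := by
    obtain ⟨α₂, β₂, hα₂, hβ₂, G₂_sq, g₂_sq⟩ := h₂.extG' hcd hc'd' γ δ hγ hδ
    obtain ⟨α₁, β₁, hα₁, hβ₁, G₁_sq, g₁_sq⟩ :=
      h₁.extG' (h₂.g.gamma_mem hcd) (h₂.g.gamma_mem hc'd') α₂ β₂ hα₂ hβ₂
    exact ⟨α₁, β₁, hα₁, hβ₁, G₁_sq.paste_squares G₂_sq,
      (g₂_sq.symm.paste_squares g₁_sq.symm).symm⟩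

/-- Compositions of dihomotopy equivalences are dihomotopy equivalences: the
composite is `(f₂ ∘ f₁, g₁ ∘ g₂, F₁ ∘ F₂, G₂ ∘ G₁)` (the bigraded data of the
composite is computed slice-wise from the given ones). -/
theorem dihomotopyEquiv_comp
    {X Y Z : Type*} [TopologicalSpace X] [TopologicalSpace Y] [TopologicalSpace Z]
    {D : DirectedSpace X} {E : DirectedSpace Y} {Fsp : DirectedSpace Z}
    (h₁ : DihomotopyEquiv D E) (h₂ : DihomotopyEquiv E Fsp) :
    ∃ h : DihomotopyEquiv D Fsp,
      h.f = h₂.f.comp' h₁.f ∧ h.g = h₁.g.comp' h₂.g ∧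
      (∀ (a b : X) (hab : (a, b) ∈ DGamma D)
        (p : ↥(DiPaths Fsp (h.f.toCM a) (h.f.toCM b)))
        (hp : p.val ∈ DiPaths Fsp (h₂.f.toCM (h₁.f.toCM a)) (h₂.f.toCM (h₁.f.toCM b))),
        ((h.F.slice hab) p).val =
          ((h₁.F.slice hab) ((h₂.F.slice (h₁.f.gamma_mem hab)) ⟨p.val, hp⟩)).val) ∧
      (∀ (c d : Z) (hcd : (c, d) ∈ DGamma Fsp)
        (q : ↥(DiPaths D (h.g.toCM c) (h.g.toCM d)))
        (hq : q.val ∈ DiPaths D (h₁.g.toCM (h₂.g.toCM c)) (h₁.g.toCM (h₂.g.toCM d))),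
        ((h.G.slice hcd) q).val =
          ((h₂.G.slice hcd) ((h₁.G.slice (h₂.g.gamma_mem hcd)) ⟨q.val, hq⟩)).val) :=
  ⟨h₁.trans h₂, rfl, rfl, fun _ _ _ _ _ => rfl, fun _ _ _ _ _ => rfl⟩
end

section
/- Let X be a d-space possessing an initial state, i.e., a point a₀ ∈ X such that for every x ∈ X there is a dipath from a₀ to x. If the dipath space map χ : PX → X × X admits a continuous section s : Γ_X → PX, then the map s'(a,b) = (s(a₀,a))⁻¹ * s(a₀,b) (concatenation of the reverse of s(a₀,a) with s(a₀,b)) is a continuous section, defined on all of X × X, of the ordinary endpoint map of the free path space of X; consequently the underlying topological space of X is contractible. -/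
/-!
The section `s` restricted to pairs `(a₀, x)` picks, continuously in `x`, a path from the initial
state to `x`. Going back along `s(a₀, a)` and forward along `s(a₀, b)` gives a path from `a` to
`b` depending continuously on `(a, b)`, and the paths from each `x` to `a₀` form a contraction.
-/

open unitInterval

variable {X : Type*} {Y : Type*} {Z : Type*}
variable [TopologicalSpace X] [TopologicalSpace Y] [TopologicalSpace Z]

/-- The dipath selected by a section of the dipath space map, as a `Path`. -/
def secPath {X : Type*} [TopologicalSpace X] (D : DirectedSpace X)
    (s : ↥(DGamma D) → C(I, X))
    (hsec : ∀ z : ↥(DGamma D), s z ∈ DiPaths D z.val.1 z.val.2)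
    (z : ↥(DGamma D)) : Path z.val.1 z.val.2 where
  toContinuousMap := s z
  source' := (hsec z).2.1
  target' := (hsec z).2.2

theorem Path.continuous_uncurry_of_continuous_coe {a b : Y → X} {γ : ∀ y, Path (a y) (b y)}
    (h : Continuous fun y => (γ y : C(I, X))) : Continuous ↿γ :=
  ContinuousMap.continuous_uncurry_of_continuous ⟨_, h⟩

theorem ContractibleSpace.of_continuous_path_family [Nonempty X]
    (γ : ∀ ab : X × X, Path ab.1 ab.2) (hγ : Continuous ↿γ) : ContractibleSpace X := by
  obtain ⟨x₀⟩ := ‹Nonempty X›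
  refine (contractible_iff_id_nullhomotopic X).2 ⟨x₀, ⟨?_⟩⟩
  exact
    { toFun := fun p => γ (p.2, x₀) p.1
      continuous_toFun := hγ.comp (continuous_snd.prodMk continuous_const |>.prodMk continuous_fst)
      map_zero_left := fun x => (γ (x, x₀)).source
      map_one_left := fun x => (γ (x, x₀)).target }

theorem continuous_secPath_of_initial (D : DirectedSpace X) {s : ↥(DGamma D) → C(I, X)}
    (hs : Continuous s) (hsec : ∀ z : ↥(DGamma D), s z ∈ DiPaths D z.val.1 z.val.2)
    (a₀ : X) (hinit : ∀ x : X, (a₀, x) ∈ DGamma D) {f : Y → X} (hf : Continuous f) :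
    Continuous ↿fun y => secPath D s hsec ⟨(a₀, f y), hinit (f y)⟩ :=
  Path.continuous_uncurry_of_continuous_coe <|
    hs.comp <| (continuous_const.prodMk hf).subtype_mk _

/-- If a d-space has an initial state `a₀` and the dipath space map admits a
continuous section `s`, then `s'(a,b) = (s(a₀,a))⁻¹ * s(a₀,b)` is a continuous
section, defined on all of `X × X`, of the endpoint map of the free path
space; consequently the underlying space is contractible. -/
theorem initial_state_section_contractible
    {X : Type*} [TopologicalSpace X] (D : DirectedSpace X)
    (a₀ : X) (hinit : ∀ x : X, (a₀, x) ∈ DGamma D)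
    (s : ↥(DGamma D) → C(I, X)) (hs : Continuous s)
    (hsec : ∀ z : ↥(DGamma D), s z ∈ DiPaths D z.val.1 z.val.2) :
    ∀ s' : X × X → C(I, X),
      s' = (fun ab : X × X =>
        ((secPath D s hsec ⟨(a₀, ab.1), hinit ab.1⟩).symm.trans
          (secPath D s hsec ⟨(a₀, ab.2), hinit ab.2⟩)).toContinuousMap) →
      (Continuous s' ∧ (∀ ab : X × X, s' ab 0 = ab.1 ∧ s' ab 1 = ab.2) ∧
        ContractibleSpace X) := by
  rintro s' rfl
  have hfam : Continuous ↿fun ab : X × X =>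
      (secPath D s hsec ⟨(a₀, ab.1), hinit ab.1⟩).symm.trans
        (secPath D s hsec ⟨(a₀, ab.2), hinit ab.2⟩) :=
    Path.trans_continuous_family _
      (Path.symm_continuous_family _
        (continuous_secPath_of_initial D hs hsec a₀ hinit continuous_fst))
      _ (continuous_secPath_of_initial D hs hsec a₀ hinit continuous_snd)
  have : Nonempty X := ⟨a₀⟩
  exact ⟨ContinuousMap.continuous_of_continuous_uncurry _ hfam,
    fun ab => ⟨Path.source _, Path.target _⟩,
    ContractibleSpace.of_continuous_path_family _ hfam⟩
end

section
/- Let X be a nonempty topological space. The endpoint map χ : C([0,1], X) → X × X, χ(p) = (p(0), p(1)), on the free path space of X (with the compact-open topology) admits a continuous section if and only if X is contractible. -/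
open unitInterval

/-- The endpoint map on the free path space `C(I, X)` of a nonempty space `X`
admits a continuous section if and only if `X` is contractible. -/
theorem freePath_endpoint_section_iff_contractible
    {X : Type*} [TopologicalSpace X] [Nonempty X] :
    (∃ s : X × X → C(I, X), Continuous s ∧
      ∀ ab : X × X, s ab 0 = ab.1 ∧ s ab 1 = ab.2) ↔ ContractibleSpace X := by
  constructor
  · rintro ⟨s, hs, hend⟩
    obtain ⟨x₀⟩ := ‹Nonempty X›
    rw [contractible_iff_id_nullhomotopic]
    refine ⟨x₀, ⟨{ toFun := fun p => s (p.2, x₀) p.1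
                   continuous_toFun := ?_
                   map_zero_left := fun x => (hend (x, x₀)).1
                   map_one_left := fun x => (hend (x, x₀)).2 }⟩⟩
    exact (ContinuousEval.continuous_eval).comp
      ((hs.comp (continuous_snd.prodMk continuous_const)).prodMk continuous_fst)
  · intro hX
    obtain ⟨x₀, ⟨H⟩⟩ := id_nullhomotopic X
    let γ : ∀ a : X, Path a x₀ := fun a =>
      { toFun := fun t => H (t, a)
        continuous_toFun := H.continuous.comp (continuous_id.prodMk continuous_const)
        source' := H.apply_zero a
        target' := H.apply_one a }
    have hγ : Continuous ↿γ := by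
      have : Continuous fun p : X × I => H (p.2, p.1) :=
        H.continuous.comp (continuous_snd.prodMk continuous_fst)
      exact this
    have hγ₁ : Continuous ↿fun p : X × X => γ p.1 :=
      hγ.comp ((continuous_fst.comp continuous_fst).prodMk continuous_snd)
    have hγ₂ : Continuous ↿fun p : X × X => (γ p.2).symm := by
      have : Continuous ↿fun p : X × X => γ p.2 :=
        hγ.comp ((continuous_snd.comp continuous_fst).prodMk continuous_snd)
      exact this.comp (continuous_fst.prodMk (continuous_symm.comp continuous_snd))
    have htrans : Continuous ↿fun p : X × X => (γ p.1).trans (γ p.2).symm :=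
      Path.trans_continuous_family _ hγ₁ _ hγ₂
    refine ⟨fun p => ((γ p.1).trans (γ p.2).symm).toContinuousMap, ?_, fun ab => ?_⟩
    · exact ContinuousMap.continuous_of_continuous_uncurry _ htrans
    · exact ⟨((γ ab.1).trans (γ ab.2).symm).source, ((γ ab.1).trans (γ ab.2).symm).target⟩
end
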